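/- Let v₁, v₂ be an orthonormal basis of ℝ², let a₁, a₂ > 0, and set Q(n) = (a₁ n·v₁)² + (a₂ n·v₂)² for n ∈ ℤ². For every R > 0, the family indexed by n ∈ ℤ² \ {0} with terms (a₁a₂/(π Q(n))) J₂(√(Q(n))·√R) is absolutely summable. -/

import Mathlib

/-!
Van der Corput's first-derivative test, applied to the phase `m θ - x sin θ` away from a window of
width `x^(-1/2)` around its stationary point `arccos (m / x)`, gives `J_m(x) = O(x^(-1/2))`.
Since `Q(n) ≥ min(a₁, a₂)² ‖n‖²`, the terms of the family are `O(‖n‖^(-5/2))`, and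
`∑_{n ∈ ℤ²} ‖n‖^(-k)` converges for `k > 2`.
-/

open Real MeasureTheory

/-- The Bessel function `J_m` for a nonnegative integer `m`. -/
noncomputable def besselJ (m : ℕ) (x : ℝ) : ℝ :=
  (1 / π) * ∫ θ in (0:ℝ)..π, Real.cos (m * θ - x * Real.sin θ)

/-- The lattice point `n ∈ ℤ²` as a vector in `ℝ²`. -/
noncomputable def latVec (n : ℤ × ℤ) : EuclideanSpace ℝ (Fin 2) :=
  (WithLp.equiv 2 (Fin 2 → ℝ)).symm ![(n.1 : ℝ), (n.2 : ℝ)]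

/-- The quadratic form `Q(n) = (a₁ n·v₁)² + (a₂ n·v₂)²` on lattice points. -/
noncomputable def Qform (v₁ v₂ : EuclideanSpace ℝ (Fin 2)) (a₁ a₂ : ℝ) (n : ℤ × ℤ) : ℝ :=
  (a₁ * (inner ℝ (latVec n) v₁ : ℝ)) ^ 2 + (a₂ * (inner ℝ (latVec n) v₂ : ℝ)) ^ 2

open Set intervalIntegral
open scoped RealInnerProductSpace

section VanDerCorput

variable {φ φ' φ'' : ℝ → ℝ} {a b : ℝ}

lemma intervalIntegrable_div_deriv_sq (hφ' : ∀ θ, HasDerivAt φ' (φ'' θ) θ)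
    (hcont : Continuous φ'') (hne : ∀ θ ∈ uIcc a b, φ' θ ≠ 0) :
    IntervalIntegrable (fun θ => φ'' θ / φ' θ ^ 2) volume a b :=
  have hcφ' : Continuous φ' := continuous_iff_continuousAt.2 fun θ => (hφ' θ).continuousAt
  (hcont.continuousOn.div (hcφ'.pow 2).continuousOn
    fun θ hθ => pow_ne_zero 2 (hne θ hθ)).intervalIntegrable

lemma integral_cos_eq_of_deriv_ne_zero (hφ : ∀ θ, HasDerivAt φ (φ' θ) θ)
    (hφ' : ∀ θ, HasDerivAt φ' (φ'' θ) θ) (hcont : Continuous φ'')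
    (hne : ∀ θ ∈ uIcc a b, φ' θ ≠ 0) :
    ∫ θ in a..b, cos (φ θ) = (φ' b)⁻¹ * sin (φ b) - (φ' a)⁻¹ * sin (φ a)
      + ∫ θ in a..b, φ'' θ / φ' θ ^ 2 * sin (φ θ) := by
  have hcφ : Continuous φ := continuous_iff_continuousAt.2 fun θ => (hφ θ).continuousAt
  have hcφ' : Continuous φ' := continuous_iff_continuousAt.2 fun θ => (hφ' θ).continuousAt
  have := integral_mul_deriv_eq_deriv_mul (u := fun θ => (φ' θ)⁻¹)
    (u' := fun θ => -(φ'' θ / φ' θ ^ 2)) (v := fun θ => sin (φ θ))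
    (v' := fun θ => cos (φ θ) * φ' θ)
    (fun θ hθ => ((hφ' θ).inv (hne θ hθ)).congr_deriv (by ring)) (fun θ _ => (hφ θ).sin)
    (intervalIntegrable_div_deriv_sq hφ' hcont hne).neg
    ((by fun_prop : Continuous fun θ => cos (φ θ) * φ' θ).intervalIntegrable _ _)
  simp only [neg_mul, intervalIntegral.integral_neg, sub_neg_eq_add] at this
  rw [← this]
  exact integral_congr fun θ hθ => by field_simp [hne θ hθ]

lemma abs_integral_cos_le_of_le_abs_deriv {l : ℝ} (hab : a ≤ b) (hl : 0 < l)
    (hφ : ∀ θ, HasDerivAt φ (φ' θ) θ) (hφ' : ∀ θ, HasDerivAt φ' (φ'' θ) θ)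
    (hcont : Continuous φ'') (hnonneg : ∀ θ ∈ Icc a b, 0 ≤ φ'' θ)
    (hlow : ∀ θ ∈ Icc a b, l ≤ |φ' θ|) :
    |∫ θ in a..b, cos (φ θ)| ≤ 4 / l := by
  rw [← uIcc_of_le hab] at hnonneg hlow
  have hne : ∀ θ ∈ uIcc a b, φ' θ ≠ 0 := fun θ hθ h0 => by
    simpa [h0, hl.not_ge] using hlow θ hθ
  have hinv : ∀ θ ∈ uIcc a b, |(φ' θ)⁻¹| ≤ l⁻¹ := fun θ hθ => by
    rw [abs_inv]; exact inv_anti₀ hl (hlow θ hθ)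
  have hwint := intervalIntegrable_div_deriv_sq hφ' hcont hne
  have hrem : |∫ θ in a..b, φ'' θ / φ' θ ^ 2 * sin (φ θ)| ≤ 2 / l := by
    have hcφ : Continuous φ := continuous_iff_continuousAt.2 fun θ => (hφ θ).continuousAt
    calc |∫ θ in a..b, φ'' θ / φ' θ ^ 2 * sin (φ θ)|
        ≤ ∫ θ in a..b, φ'' θ / φ' θ ^ 2 := by
          refine (abs_integral_le_integral_abs hab).trans (integral_mono_on hab ?_ hwint ?_)
          · exact (hwint.mul_continuousOn
              (by fun_prop : Continuous fun θ => sin (φ θ)).continuousOn).abs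
          · intro θ hθ
            rw [← uIcc_of_le hab] at hθ
            have hw0 : 0 ≤ φ'' θ / φ' θ ^ 2 := div_nonneg (hnonneg θ hθ) (sq_nonneg _)
            rw [abs_mul, abs_of_nonneg hw0]
            exact mul_le_of_le_one_right hw0 (abs_sin_le_one _)
      _ = (φ' a)⁻¹ - (φ' b)⁻¹ := by
          rw [integral_eq_sub_of_hasDerivAt (f := fun θ => -(φ' θ)⁻¹)
            (fun θ hθ => ((hφ' θ).inv (hne θ hθ)).neg.congr_deriv (by ring)) hwint]
          ring
      _ ≤ 2 / l := by
          have := abs_le.1 (hinv a left_mem_uIcc)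
          have := abs_le.1 (hinv b right_mem_uIcc)
          rw [div_eq_mul_inv]
          linarith
  have hend : ∀ θ ∈ uIcc a b, |(φ' θ)⁻¹ * sin (φ θ)| ≤ l⁻¹ := fun θ hθ => by
    rw [abs_mul]
    exact (mul_le_mul (hinv θ hθ) (abs_sin_le_one _) (abs_nonneg _) (by positivity)).trans_eq
      (mul_one _)
  rw [integral_cos_eq_of_deriv_ne_zero hφ hφ' hcont hne]
  calc _ ≤ |(φ' b)⁻¹ * sin (φ b)| + |(φ' a)⁻¹ * sin (φ a)|
        + |∫ θ in a..b, φ'' θ / φ' θ ^ 2 * sin (φ θ)| :=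
        (abs_add_le _ _).trans (add_le_add_left (abs_sub _ _) _)
    _ ≤ l⁻¹ + l⁻¹ + 2 / l := by
        gcongr
        exacts [hend b right_mem_uIcc, hend a left_mem_uIcc]
    _ = 4 / l := by ring

end VanDerCorput

lemma one_half_le_sin {θ : ℝ} (h₁ : π / 6 ≤ θ) (h₂ : θ ≤ 5 * π / 6) : 1 / 2 ≤ sin θ := by
  rw [← sin_pi_div_six]
  rcases le_total θ (π / 2) with h | h
  · exact sin_le_sin_of_le_of_le_pi_div_two (by linarith [pi_pos]) h h₁
  · rw [← sin_pi_sub θ]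
    exact sin_le_sin_of_le_of_le_pi_div_two (by linarith [pi_pos]) (by linarith) (by linarith)

lemma div_four_le_cos_sub_cos_add {α δ : ℝ} (hα : π / 6 ≤ α) (hδ : 0 ≤ δ)
    (hαδ : α + δ ≤ 5 * π / 6) : δ / 4 ≤ cos α - cos (α + δ) := by
  have hprod : cos α - cos (α + δ) = 2 * sin (α + δ / 2) * sin (δ / 2) := by
    rw [cos_sub_cos, show (α - (α + δ)) / 2 = -(δ / 2) by ring, sin_neg]; ring_nf
  have hmid : 1 / 2 ≤ sin (α + δ / 2) := one_half_le_sin (by linarith) (by linarith)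
  have hjordan : δ / 4 ≤ sin (δ / 2) := by
    refine le_trans ?_ (mul_le_sin (by linarith) (by linarith))
    rw [div_mul_div_comm, le_div_iff₀ (by positivity)]
    nlinarith [pi_le_four]
  rw [hprod]
  nlinarith

lemma div_four_le_abs_cos_sub_cos {θ θ₀ δ : ℝ} (hθ : θ ∈ Icc 0 π) (hδ : 0 ≤ δ)
    (hlo : π / 6 ≤ θ₀ - δ) (hhi : θ₀ + δ ≤ 5 * π / 6) (hfar : δ ≤ |θ - θ₀|) :
    δ / 4 ≤ |cos θ - cos θ₀| := by
  rcases le_total θ θ₀ with h | h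
  · rw [abs_sub_comm, abs_of_nonneg (by linarith)] at hfar
    have hgap := div_four_le_cos_sub_cos_add hlo hδ (by linarith)
    rw [sub_add_cancel] at hgap
    have : cos (θ₀ - δ) ≤ cos θ := cos_le_cos_of_nonneg_of_le_pi hθ.1 (by linarith) (by linarith)
    exact le_abs.2 (Or.inl (by linarith))
  · rw [abs_of_nonneg (by linarith)] at hfar
    have hgap := div_four_le_cos_sub_cos_add (by linarith) hδ hhi
    have : cos θ ≤ cos (θ₀ + δ) := cos_le_cos_of_nonneg_of_le_pi (by linarith) hθ.2 (by linarith)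
    exact le_abs.2 (Or.inr (by linarith))

lemma arccos_mem_Icc_of_le_one_half {y : ℝ} (h₀ : 0 ≤ y) (h₁ : y ≤ 1 / 2) :
    arccos y ∈ Icc (π / 3) (π / 2) := by
  refine ⟨?_, arccos_le_pi_div_two.2 h₀⟩
  rw [← arccos_cos (by positivity) (by linarith [pi_pos] : π / 3 ≤ π), cos_pi_div_three]
  exact arccos_le_arccos h₁

lemma mul_div_four_le_abs_sub_mul_cos {m x δ θ : ℝ} (hm : 0 ≤ m) (hx : 0 < x)
    (hmx : 2 * m ≤ x) (hδ : 0 ≤ δ) (hδ' : δ ≤ 1 / 2) (hθ : θ ∈ Icc 0 π)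
    (hfar : δ ≤ |θ - arccos (m / x)|) : x * δ / 4 ≤ |m - x * cos θ| := by
  have hmx' : m / x ≤ 1 / 2 := by rw [div_le_iff₀ hx]; linarith
  have hθ₀ := arccos_mem_Icc_of_le_one_half (div_nonneg hm hx.le) hmx'
  have hgap := div_four_le_abs_cos_sub_cos hθ hδ (by linarith [hθ₀.1, pi_gt_three])
    (by linarith [hθ₀.2, pi_gt_three]) hfar
  rw [show m - x * cos θ = x * (cos (arccos (m / x)) - cos θ) by
      rw [cos_arccos (by linarith [div_nonneg hm hx.le]) (by linarith)]; field_simp,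
    abs_mul, abs_of_pos hx, abs_sub_comm, mul_div_assoc]
  exact mul_le_mul_of_nonneg_left hgap hx.le

lemma abs_integral_cos_mul_sub_mul_sin_le {m x : ℝ} (hm : 0 ≤ m) (hx : 4 ≤ x) (hmx : 2 * m ≤ x) :
    |∫ θ in (0:ℝ)..π, cos (m * θ - x * sin θ)| ≤ 34 / √x := by
  have hx0 : 0 < x := by linarith
  -- `θ₀` is the stationary point of the phase, and `δ` the width of the window around it
  set θ₀ := arccos (m / x)
  set δ := (√x)⁻¹
  obtain ⟨hθ₀lo, hθ₀hi⟩ : θ₀ ∈ Icc (π / 3) (π / 2) :=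
    arccos_mem_Icc_of_le_one_half (div_nonneg hm hx0.le) (by rw [div_le_iff₀ hx0]; linarith)
  have hπ := pi_gt_three
  have hδ0 : 0 < δ := by positivity
  have hδ : δ ≤ 1 / 2 := by
    rw [one_div]; exact inv_anti₀ two_pos ((le_sqrt zero_le_two hx0.le).2 (by linarith))
  have hxδ : x * δ = √x := by rw [← div_eq_mul_inv, div_sqrt]
  have hlow : ∀ θ ∈ Icc 0 π, δ ≤ |θ - θ₀| → √x / 4 ≤ |m - x * cos θ| := fun θ hθ hfar =>
    hxδ ▸ mul_div_four_le_abs_sub_mul_cos hm hx0 hmx hδ0.le hδ hθ hfar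
  have hφ : ∀ θ, HasDerivAt (fun θ => m * θ - x * sin θ) (m - x * cos θ) θ := fun θ =>
    (((hasDerivAt_id θ).const_mul m).sub ((hasDerivAt_sin θ).const_mul x)).congr_deriv (by simp)
  have hφ' : ∀ θ, HasDerivAt (fun θ => m - x * cos θ) (x * sin θ) θ := fun θ => by
    simpa using ((hasDerivAt_cos θ).const_mul x).const_sub m
  have hconvex : ∀ θ ∈ Icc 0 π, 0 ≤ x * sin θ := fun θ hθ =>
    mul_nonneg hx0.le (sin_nonneg_of_nonneg_of_le_pi hθ.1 hθ.2)
  have hleft := abs_integral_cos_le_of_le_abs_deriv (a := 0) (b := θ₀ - δ)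
    (by linarith) (by positivity) hφ hφ' (by fun_prop)
    (fun θ hθ => hconvex θ ⟨hθ.1, by linarith [hθ.2]⟩)
    (fun θ hθ => hlow θ ⟨hθ.1, by linarith [hθ.2]⟩
      (by rw [abs_sub_comm, abs_of_nonneg (by linarith [hθ.2])]; linarith [hθ.2]))
  have hright := abs_integral_cos_le_of_le_abs_deriv (a := θ₀ + δ) (b := π)
    (by linarith) (by positivity) hφ hφ' (by fun_prop)
    (fun θ hθ => hconvex θ ⟨by linarith [hθ.1], hθ.2⟩)
    (fun θ hθ => hlow θ ⟨by linarith [hθ.1], hθ.2⟩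
      (by rw [abs_of_nonneg (by linarith [hθ.1])]; linarith [hθ.1]))
  have hmid : |∫ θ in (θ₀ - δ)..(θ₀ + δ), cos (m * θ - x * sin θ)| ≤ 2 * δ := by
    have := norm_integral_le_of_norm_le_const (a := θ₀ - δ) (b := θ₀ + δ) (C := 1)
      (f := fun θ => cos (m * θ - x * sin θ)) fun θ _ => abs_cos_le_one _
    rwa [one_mul, show θ₀ + δ - (θ₀ - δ) = 2 * δ by ring, abs_of_pos (by positivity)] at this
  have hint : ∀ a b : ℝ, IntervalIntegrable (fun θ => cos (m * θ - x * sin θ)) volume a b :=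
    fun a b => (by fun_prop : Continuous fun θ => cos (m * θ - x * sin θ)).intervalIntegrable a b
  rw [← integral_add_adjacent_intervals (hint 0 (θ₀ - δ)) (hint _ π),
    ← integral_add_adjacent_intervals (hint (θ₀ - δ) (θ₀ + δ)) (hint _ π)]
  have hδx : √x * δ = 1 := mul_inv_cancel₀ (by positivity)
  calc _ ≤ 4 / (√x / 4) + (2 * δ + 4 / (√x / 4)) := (abs_add_le _ _).trans
        (add_le_add hleft ((abs_add_le _ _).trans (add_le_add hmid hright)))
    _ = 34 / √x := by field_simp; linarith

lemma abs_besselJ_le_one (m : ℕ) (x : ℝ) : |besselJ m x| ≤ 1 := by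
  have h := norm_integral_le_of_norm_le_const (a := 0) (b := π) (C := 1)
    (f := fun θ => cos (m * θ - x * sin θ)) fun θ _ => abs_cos_le_one _
  rw [one_mul, sub_zero, abs_of_pos pi_pos] at h
  rw [besselJ, abs_mul, abs_of_pos (by positivity), one_div, inv_mul_le_one₀ pi_pos]
  exact h

lemma exists_abs_besselJ_le_div_sqrt (m : ℕ) : ∃ C, ∀ x > 0, |besselJ m x| ≤ C / √x := by
  refine ⟨34 + √(2 * m + 4), fun x hx => ?_⟩
  rcases le_total (2 * m + 4 : ℝ) x with hlarge | hsmall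
  · have hI := abs_integral_cos_mul_sub_mul_sin_le (m.cast_nonneg) (by linarith) (by linarith)
    rw [besselJ, abs_mul, abs_of_pos (by positivity)]
    calc 1 / π * |∫ θ in (0:ℝ)..π, cos (m * θ - x * sin θ)| ≤ 1 * (34 / √x) := by
          gcongr; rw [div_le_one pi_pos]; linarith [pi_gt_three]
      _ ≤ _ := by rw [one_mul]; gcongr; exact le_add_of_nonneg_right (sqrt_nonneg _)
  · calc |besselJ m x| ≤ 1 := abs_besselJ_le_one m x
      _ ≤ √(2 * m + 4) / √x := by rw [one_le_div (sqrt_pos.2 hx)]; exact sqrt_le_sqrt hsmall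
      _ ≤ _ := by gcongr; exact le_add_of_nonneg_left (by norm_num)

theorem Orthonormal.sum_sq_inner_eq_norm_sq {ι E : Type*} [Fintype ι] [Nonempty ι]
    [NormedAddCommGroup E] [InnerProductSpace ℝ E] {v : ι → E} (hv : Orthonormal ℝ v)
    (hcard : Fintype.card ι = Module.finrank ℝ E) (x : E) :
    ∑ i, ⟪x, v i⟫ ^ 2 = ‖x‖ ^ 2 := by
  simpa using (OrthonormalBasis.mk hv
    (hv.linearIndependent.span_eq_top_of_card_eq_finrank hcard).ge).sum_sq_inner_left x

lemma summable_norm_rpow_neg_int_prod {k : ℝ} (hk : 2 < k) :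
    Summable fun n : ℤ × ℤ => ‖n‖ ^ (-k) := by
  refine ((finTwoArrowEquiv ℤ).symm.summable_iff.2
    (EisensteinSeries.summable_one_div_norm_rpow hk)).congr fun n => ?_
  simp [EisensteinSeries.norm_eq_max_natAbs, Prod.norm_def, Int.norm_eq_abs]

lemma norm_le_norm_latVec (n : ℤ × ℤ) : ‖n‖ ≤ ‖latVec n‖ := by
  rw [Prod.norm_def]
  refine max_le ?_ ?_
  · simpa [latVec, Int.norm_eq_abs] using PiLp.norm_apply_le (latVec n) 0
  · simpa [latVec, Int.norm_eq_abs] using PiLp.norm_apply_le (latVec n) 1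

lemma min_sq_mul_norm_sq_le_Qform {v₁ v₂ : EuclideanSpace ℝ (Fin 2)} {a₁ a₂ : ℝ}
    (hv₁ : ‖v₁‖ = 1) (hv₂ : ‖v₂‖ = 1) (hv : ⟪v₁, v₂⟫ = 0) (ha₁ : 0 < a₁) (ha₂ : 0 < a₂)
    (n : ℤ × ℤ) : min a₁ a₂ ^ 2 * ‖n‖ ^ 2 ≤ Qform v₁ v₂ a₁ a₂ n := by
  have hon : Orthonormal ℝ ![v₁, v₂] := by simp [hv₁, hv₂, hv]
  have hpar := hon.sum_sq_inner_eq_norm_sq (by simp) (latVec n)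
  simp only [Fin.sum_univ_two, Matrix.cons_val_zero, Matrix.cons_val_one] at hpar
  have hmin : 0 ≤ min a₁ a₂ := le_min ha₁.le ha₂.le
  calc min a₁ a₂ ^ 2 * ‖n‖ ^ 2
      ≤ min a₁ a₂ ^ 2 * (⟪latVec n, v₁⟫ ^ 2 + ⟪latVec n, v₂⟫ ^ 2) := by
        rw [hpar]; gcongr; exact norm_le_norm_latVec n
    _ ≤ a₁ ^ 2 * ⟪latVec n, v₁⟫ ^ 2 + a₂ ^ 2 * ⟪latVec n, v₂⟫ ^ 2 := by
        rw [mul_add]; gcongr; exacts [min_le_left _ _, min_le_right _ _]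
    _ = Qform v₁ v₂ a₁ a₂ n := by rw [Qform]; ring

lemma abs_div_mul_besselJ_le {m : ℕ} {A C c R q N : ℝ}
    (hJ : ∀ x > 0, |besselJ m x| ≤ C / √x) (hA : 0 ≤ A) (hc : 0 < c) (hR : 0 < R) (hN : 0 < N)
    (hq : c * N ^ 2 ≤ q) :
    |A / (π * q) * besselJ m (√q * √R)| ≤
      A * C / (π * c * √(√c * √R)) * N ^ (-(5 / 2 : ℝ)) := by
  have hq0 : 0 < q := (by positivity : 0 < c * N ^ 2).trans_le hq
  have hC : 0 ≤ C := by simpa using (abs_nonneg _).trans (hJ 1 one_pos)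
  have hsqrt : √(√(c * N ^ 2) * √R) = √(√c * √R) * √N := by
    rw [sqrt_mul hc.le, sqrt_sq hN.le, mul_right_comm, sqrt_mul (by positivity)]
  have hrpow : N ^ (-(5 / 2 : ℝ)) = (N ^ 2 * √N)⁻¹ := by
    rw [rpow_neg hN.le, show (5 / 2 : ℝ) = 2 + 1 / 2 by norm_num, rpow_add hN, rpow_two,
      ← sqrt_eq_rpow]
  calc |A / (π * q) * besselJ m (√q * √R)|
      = A / (π * q) * |besselJ m (√q * √R)| := by
        rw [abs_mul, abs_of_nonneg (by positivity)]
    _ ≤ A / (π * q) * (C / √(√q * √R)) := by gcongr; exact hJ _ (by positivity)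
    _ = A * C / (π * (q * √(√q * √R))) := by field_simp
    _ ≤ A * C / (π * (c * N ^ 2 * √(√(c * N ^ 2) * √R))) := by gcongr
    _ = A * C / (π * c * √(√c * √R)) * N ^ (-(5 / 2 : ℝ)) := by
        rw [hsqrt, hrpow]; field_simp

/-- For every `R > 0` the family `(a₁a₂/(π Q(n))) J₂(√(Q(n))√R)`, indexed by nonzero
lattice points, is absolutely summable. -/
theorem ellipse_sum_absolutely_summable (v₁ v₂ : EuclideanSpace ℝ (Fin 2)) (a₁ a₂ : ℝ)
    (hv₁ : ‖v₁‖ = 1) (hv₂ : ‖v₂‖ = 1) (hv : (inner ℝ v₁ v₂ : ℝ) = 0)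
    (ha₁ : 0 < a₁) (ha₂ : 0 < a₂) (R : ℝ) (hR : 0 < R) :
    Summable (fun n : {n : ℤ × ℤ // n ≠ 0} =>
      |(a₁ * a₂ / (π * Qform v₁ v₂ a₁ a₂ n.1))
        * besselJ 2 (Real.sqrt (Qform v₁ v₂ a₁ a₂ n.1) * Real.sqrt R)|) := by
  obtain ⟨C, hC⟩ := exists_abs_besselJ_le_div_sqrt 2
  have hc : 0 < min a₁ a₂ ^ 2 := by have := lt_min ha₁ ha₂; positivity
  refine .of_nonneg_of_le (fun _ => abs_nonneg _) (fun n => abs_div_mul_besselJ_le hC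
    (by positivity) hc hR (norm_pos_iff.2 n.2)
    (min_sq_mul_norm_sq_le_Qform hv₁ hv₂ hv ha₁ ha₂ n)) ?_
  exact ((summable_norm_rpow_neg_int_prod (by norm_num)).mul_left _).comp_injective
    Subtype.coe_injective
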